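/- Every diametrical path in a graph G belonging to class B contains a central vertex of G. -/

import Mathlib

open SimpleGraph

variable {V : Type*}

/-- `v` is a cut-vertex of the graph `G`: deleting `v` disconnects `G`. -/
def CutVtx (G : SimpleGraph V) (v : V) : Prop :=
  ¬ (G.induce {v}ᶜ).Connected

/-- A nonseparable graph: connected and with no cut-vertex. -/
def NoCutVtx {W : Type*} (H : SimpleGraph W) : Prop :=
  H.Connected ∧ ∀ w : W, (H.induce {w}ᶜ).Connected

/-- `B` is (the vertex set of) a block of `G`: a maximal nonseparable
induced subgraph. -/
def IsBlockSet (G : SimpleGraph V) (B : Set V) : Prop :=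
  NoCutVtx (G.induce B) ∧ ∀ C : Set V, B ⊆ C → NoCutVtx (G.induce C) → B = C

/-- The set of cut-vertices of `G`. -/
def cutSet (G : SimpleGraph V) : Set V := {v | CutVtx G v}

/-- The set `B` induces a complete bipartite graph in `G` with
bipartition `(V1, V2)`. -/
def CompBipOn (G : SimpleGraph V) (B V1 V2 : Set V) : Prop :=
  V1.Nonempty ∧ V2.Nonempty ∧ Disjoint V1 V2 ∧ V1 ∪ V2 = B ∧
    ∀ x ∈ B, ∀ y ∈ B, (G.Adj x y ↔ (x ∈ V1 ∧ y ∈ V2) ∨ (x ∈ V2 ∧ y ∈ V1))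

/-- A bi-block graph: a connected graph all of whose blocks are
complete bipartite. -/
def BiBlockGraph (G : SimpleGraph V) : Prop :=
  G.Connected ∧ ∀ B : Set V, IsBlockSet G B → ∃ V1 V2 : Set V, CompBipOn G B V1 V2

/-- The class 𝓑: bi-block graphs with at least two blocks and at most two
cut-vertices in each block. -/
def ClassB (G : SimpleGraph V) : Prop :=
  BiBlockGraph G ∧
  (∃ B1 B2 : Set V, IsBlockSet G B1 ∧ IsBlockSet G B2 ∧ B1 ≠ B2) ∧
  ∀ B : Set V, IsBlockSet G B → (B ∩ cutSet G).ncard ≤ 2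

/-- `S` is an admissible vertex set for the associated tree `T_G`:
it contains all cut-vertices of `G`, both vertices of every `K_{1,1}` block,
exactly one non-cut-vertex from each partite set of every leaf block,
exactly one non-cut-vertex from the cut-vertex-free partite set of every
bridge block whose two cut-vertices share a partite set, and no other
vertices. -/
def AssocSet (G : SimpleGraph V) (S : Set V) : Prop :=
  (∀ v, CutVtx G v → v ∈ S) ∧
  ∀ B V1 V2 : Set V, IsBlockSet G B → CompBipOn G B V1 V2 →
    ((V1.ncard = 1 ∧ V2.ncard = 1) → B ⊆ S) ∧
    (¬ (V1.ncard = 1 ∧ V2.ncard = 1) →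
      (((B ∩ cutSet G).ncard = 1) →
          (S ∩ (V1 \ cutSet G)).ncard = 1 ∧ (S ∩ (V2 \ cutSet G)).ncard = 1) ∧
      (((B ∩ cutSet G).ncard = 2) →
          (((V1 ∩ cutSet G).ncard = 2) →
              (S ∩ (V2 \ cutSet G)).ncard = 1 ∧ S ∩ (V1 \ cutSet G) = ∅) ∧
          (((V2 ∩ cutSet G).ncard = 2) →
              (S ∩ (V1 \ cutSet G)).ncard = 1 ∧ S ∩ (V2 \ cutSet G) = ∅) ∧
          (((V1 ∩ cutSet G).ncard = 1 ∧ (V2 ∩ cutSet G).ncard = 1) →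
              S ∩ (B \ cutSet G) = ∅)))

/-- The eccentricity of a vertex. -/
noncomputable def ecc (G : SimpleGraph V) (v : V) : ℕ := sSup (Set.range (G.dist v))

/-- The diameter of a graph. -/
noncomputable def gdiam (G : SimpleGraph V) : ℕ := sSup (Set.range (ecc G))

/-- The radius of a graph. -/
noncomputable def gradius (G : SimpleGraph V) : ℕ := sInf (Set.range (ecc G))

/-- The center of a graph: vertices of minimum eccentricity. -/
noncomputable def gcenter (G : SimpleGraph V) : Set V := {v | ecc G v = gradius G}

/-- The eccentricity matrix of `G`. -/
noncomputable def eccMatrix (G : SimpleGraph V) : Matrix V V ℝ := fun u v =>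
  if G.dist u v = min (ecc G u) (ecc G v) then (G.dist u v : ℝ) else 0

/-- The spectrum of the eccentricity matrix of `G` is symmetric with respect
to the origin: `μ` is an eigenvalue with multiplicity `l` iff `-μ` is. -/
def SpectrumSymm [Fintype V] [DecidableEq V] (G : SimpleGraph V) : Prop :=
  ∀ (hH : (eccMatrix G).IsHermitian) (μ : ℝ),
    {i | hH.eigenvalues i = μ}.ncard = {i | hH.eigenvalues i = -μ}.ncard

/-- A vertex is diametrically distinguished if it lies on some diametrical
path and is adjacent to some central vertex. -/
noncomputable def DiamDistinguished (G : SimpleGraph V) (u : V) : Prop :=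
  (∃ (a b : V) (p : G.Walk a b), p.IsPath ∧ p.length = G.dist a b ∧
      G.dist a b = gdiam G ∧ u ∈ p.support) ∧
  ∃ z ∈ gcenter G, G.Adj u z

/-!
Let `p` be a diametrical path of length `d` from `a` to `b`. Every vertex is at distance at least
`⌈d/2⌉` from `a` or from `b`, so a vertex of `p` within distance `⌈d/2⌉` of all vertices is
central. A middle vertex of `p` that separates `a` from `b` has this property. Otherwise the
detour around it closes a cycle, so it lies in one block with its two neighbours on `p`.

For odd `d` this puts both middle vertices of `p` into one complete bipartite block, of diameter
at most `2`, although their outer neighbours on `p` are at distance `3`. For even `d = 2k` let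
`x z y` be the middle of `p`, in the block `B`; every vertex `w` enters `B` through a unique gate,
and `x`, `y` are the gates of `a`, `b`. If `w` were farther than `k` from `z`, then `a` or `b`
would be farther than `d` from `w` unless the gate of `w` lies on the side of `z`, away from `z`.
In that case the gates of `a`, `b`, `w` are three cut-vertices of `B` when `k ≥ 2`. When `k = 1`,
both sides of `B` have two vertices, so a vertex outside `B` (one exists, since `G` has a second
block) is at distance `3` from some vertex of `B`.
-/

section

variable {G : SimpleGraph V} {S T B : Set V} {a b c u v w x y z o g q : V}

theorem SimpleGraph.connected_induce_induce_iff {T : Set S} :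
    ((G.induce S).induce T).Connected ↔ (G.induce (Subtype.val '' T)).Connected := by
  let f := (Embedding.induce (G := G) S).comp (Embedding.induce T)
  have hf : Set.range f = Subtype.val '' T := by
    rw [show ⇑f = Subtype.val ∘ Subtype.val from rfl, Set.range_comp, Subtype.range_coe]
  rw [f.isoInduceRange.connected_iff, hf]

theorem noCutVtx_induce_iff :
    NoCutVtx (G.induce S) ↔ (G.induce S).Connected ∧ ∀ x, (G.induce (S \ {x})).Connected := by
  have himage : ∀ w : S, Subtype.val '' ({w}ᶜ : Set S) = S \ {w.1} := by
    intro w; rw [Set.image_val_compl, Set.image_singleton]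
  refine and_congr_right fun hS => ⟨fun h x => ?_, fun h w => ?_⟩
  · by_cases hx : x ∈ S
    · have hx' := h ⟨x, hx⟩
      rwa [connected_induce_induce_iff, himage] at hx'
    · rwa [Set.sdiff_singleton_eq_self hx]
  · rw [connected_induce_induce_iff, himage]
    exact h w

theorem noCutVtx_induce_pair (h : G.Adj u v) : NoCutVtx (G.induce {u, v}) := by
  refine noCutVtx_induce_iff.2 ⟨induce_pair_connected_of_adj h, fun x => ?_⟩
  have hsingle : ∀ c : V, (G.induce {c}).Connected := fun c => by
    rw [induce_singleton_eq_top]; exact connected_top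
  by_cases hxu : x = u
  · rw [hxu, Set.pair_sdiff_left h.ne]; exact hsingle v
  by_cases hxv : x = v
  · rw [hxv, Set.pair_sdiff_right h.ne]; exact hsingle u
  rw [Set.sdiff_singleton_eq_self (by simp [hxu, hxv])]
  exact induce_pair_connected_of_adj h

theorem NoCutVtx.induce_union (hS : NoCutVtx (G.induce S)) (hT : NoCutVtx (G.induce T))
    (hu : u ∈ S ∩ T) (hv : v ∈ S ∩ T) (huv : u ≠ v) : NoCutVtx (G.induce (S ∪ T)) := by
  rw [noCutVtx_induce_iff] at *
  refine ⟨induce_union_connected hS.1.preconnected hT.1.preconnected ⟨u, hu⟩, fun x => ?_⟩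
  obtain ⟨c, hc, hcx⟩ : ∃ c ∈ S ∩ T, c ≠ x := by
    by_cases hux : u = x
    · exact ⟨v, hv, hux ▸ huv.symm⟩
    · exact ⟨u, hu, hux⟩
  rw [Set.union_sdiff_distrib]
  exact induce_union_connected (hS.2 x).preconnected (hT.2 x).preconnected
    ⟨c, ⟨hc.1, hcx⟩, hc.2, hcx⟩

theorem SimpleGraph.Walk.IsPath.exists_walk_to_end_avoiding {p : G.Walk u v} (hp : p.IsPath)
    (hy : y ∈ p.support) (hxy : x ≠ y) :
    ∃ e, (e = u ∨ e = v) ∧ ∃ W : G.Walk y e, x ∉ W.support ∧ ∀ z ∈ W.support, z ∈ p.support := by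
  classical
  by_cases hx : x ∈ (p.takeUntil y hy).support
  · refine ⟨v, Or.inr rfl, p.dropUntil y hy, fun hx' => ?_,
      fun z hz => p.support_dropUntil_subset_support hy hz⟩
    have hnodup := hp.support_nodup
    rw [← p.take_spec hy, Walk.support_append, List.nodup_append] at hnodup
    rw [← Walk.cons_tail_support, List.mem_cons] at hx'
    exact hnodup.2.2 x hx x (hx'.resolve_left hxy) rfl
  · refine ⟨u, Or.inl rfl, (p.takeUntil y hy).reverse, by simpa using hx, fun z hz => ?_⟩
    rw [Walk.support_reverse, List.mem_reverse] at hz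
    exact p.support_takeUntil_subset_support hy hz

theorem NoCutVtx.induce_union_support (hS : NoCutVtx (G.induce S)) {p : G.Walk u v}
    (hp : p.IsPath) (hu : u ∈ S) (hv : v ∈ S) :
    NoCutVtx (G.induce (S ∪ {x | x ∈ p.support})) := by
  rw [noCutVtx_induce_iff] at *
  refine ⟨induce_union_connected hS.1.preconnected p.connected_induce_support.preconnected
    ⟨u, hu, p.start_mem_support⟩, fun x => ?_⟩
  obtain ⟨c, hc⟩ := (hS.2 x).nonempty
  refine induce_connected_of_patches c ⟨Or.inl hc.1, hc.2⟩ fun {y} hy => ?_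
  obtain ⟨hy | hy, hyx⟩ := hy
  · exact ⟨S \ {x}, Set.sdiff_subset_sdiff_left Set.subset_union_left, hc, ⟨hy, hyx⟩,
      (hS.2 x).preconnected _ _⟩
  obtain ⟨e, he, W, hWx, hWp⟩ := hp.exists_walk_to_end_avoiding hy (Ne.symm hyx)
  have heS : e ∈ S \ {x} := by
    refine ⟨he.elim (· ▸ hu) (· ▸ hv), fun hex => hWx ?_⟩
    rw [← Set.mem_singleton_iff.1 hex]
    exact W.end_mem_support
  refine ⟨S \ {x} ∪ {z | z ∈ W.support}, ?_, Or.inl hc, Or.inr W.start_mem_support,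
    (induce_union_connected (hS.2 x).preconnected W.connected_induce_support.preconnected
      ⟨e, heS, W.end_mem_support⟩).preconnected _ _⟩
  rintro z (hz | hz)
  · exact ⟨Or.inl hz.1, hz.2⟩
  · exact ⟨Or.inr (hWp z hz), fun hzx => hWx (Set.mem_singleton_iff.1 hzx ▸ hz)⟩

theorem exists_isBlockSet_superset [Finite V] (hS : NoCutVtx (G.induce S)) :
    ∃ B, S ⊆ B ∧ IsBlockSet G B := by
  obtain ⟨B, hSB, hmax⟩ := Set.Finite.exists_le_maximal
    (Set.toFinite {C : Set V | S ⊆ C ∧ NoCutVtx (G.induce C)}) ⟨subset_rfl, hS⟩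
  exact ⟨B, hSB, hmax.prop.2, fun C hBC hC => le_antisymm hBC (hmax.2 ⟨hSB.trans hBC, hC⟩ hBC)⟩

theorem IsBlockSet.eq_of_mem_of_mem {B' : Set V} (hB : IsBlockSet G B) (hB' : IsBlockSet G B')
    (hu : u ∈ B ∩ B') (hv : v ∈ B ∩ B') (huv : u ≠ v) : B = B' :=
  have hunion := hB.1.induce_union hB'.1 hu hv huv
  (hB.2 _ Set.subset_union_left hunion).trans (hB'.2 _ Set.subset_union_right hunion).symm

theorem IsBlockSet.mem_of_mem_support (hB : IsBlockSet G B) {p : G.Walk u v} (hp : p.IsPath)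
    (hu : u ∈ B) (hv : v ∈ B) (hx : x ∈ p.support) : x ∈ B := by
  rw [hB.2 _ Set.subset_union_left (hB.1.induce_union_support hp hu hv)]
  exact Or.inr hx

theorem IsBlockSet.exists_not_mem (hB : IsBlockSet G B)
    (htwo : ∃ B₁ B₂, IsBlockSet G B₁ ∧ IsBlockSet G B₂ ∧ B₁ ≠ B₂) : ∃ o, o ∉ B := by
  by_contra! hall
  obtain ⟨B₁, B₂, hB₁, hB₂, hne⟩ := htwo
  exact hne ((hB₁.2 B (fun x _ => hall x) hB.1).trans (hB₂.2 B (fun x _ => hall x) hB.1).symm)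

namespace CompBipOn

variable {V₁ V₂ : Set V}

theorem symm (h : CompBipOn G B V₁ V₂) : CompBipOn G B V₂ V₁ := by
  obtain ⟨h₁, h₂, hdisj, hunion, hadj⟩ := h
  exact ⟨h₂, h₁, hdisj.symm, Set.union_comm V₁ V₂ ▸ hunion,
    fun x hx y hy => (hadj x hx y hy).trans or_comm⟩

theorem left_subset (h : CompBipOn G B V₁ V₂) : V₁ ⊆ B :=
  h.2.2.2.1 ▸ Set.subset_union_left

theorem mem_or_mem (h : CompBipOn G B V₁ V₂) (hu : u ∈ B) : u ∈ V₁ ∨ u ∈ V₂ := by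
  rwa [← h.2.2.2.1] at hu

theorem adj (h : CompBipOn G B V₁ V₂) (hu : u ∈ V₁) (hv : v ∈ V₂) : G.Adj u v :=
  (h.2.2.2.2 u (h.left_subset hu) v (h.symm.left_subset hv)).2 (Or.inl ⟨hu, hv⟩)

theorem ne (h : CompBipOn G B V₁ V₂) (hu : u ∈ V₁) (hv : v ∈ V₂) : u ≠ v :=
  h.2.2.1.ne_of_mem hu hv

theorem not_adj (h : CompBipOn G B V₁ V₂) (hu : u ∈ V₁) (hv : v ∈ V₁) : ¬ G.Adj u v := by
  rw [h.2.2.2.2 u (h.left_subset hu) v (h.left_subset hv)]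
  rintro (⟨-, hv₂⟩ | ⟨hu₂, -⟩)
  · exact h.ne hv hv₂ rfl
  · exact h.ne hu hu₂ rfl

theorem mem_right_of_adj (h : CompBipOn G B V₁ V₂) (hu : u ∈ V₁) (hv : v ∈ B) (huv : G.Adj u v) :
    v ∈ V₂ :=
  (h.mem_or_mem hv).resolve_left fun hv₁ => h.not_adj hu hv₁ huv

theorem dist_eq_one (h : CompBipOn G B V₁ V₂) (hu : u ∈ V₁) (hv : v ∈ V₂) : G.dist u v = 1 :=
  dist_eq_one_iff_adj.2 (h.adj hu hv)

theorem dist_eq_two (h : CompBipOn G B V₁ V₂) (hu : u ∈ V₁) (hv : v ∈ V₁) (huv : u ≠ v) :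
    G.dist u v = 2 := by
  obtain ⟨c, hc⟩ := h.2.1
  let W : G.Walk u v := .cons (h.adj hu hc) (.cons (h.adj hv hc).symm .nil)
  exact le_antisymm (dist_le W) (W.reachable.one_lt_dist_of_ne_of_not_adj huv (h.not_adj hu hv))

theorem dist_le_two (h : CompBipOn G B V₁ V₂) (hu : u ∈ B) (hv : v ∈ B) : G.dist u v ≤ 2 := by
  by_cases huv : u = v
  · simp [huv]
  rcases h.mem_or_mem hu with hu | hu <;> rcases h.mem_or_mem hv with hv | hv
  · exact (h.dist_eq_two hu hv huv).le
  · simp [h.dist_eq_one hu hv]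
  · simp [h.symm.dist_eq_one hu hv]
  · exact (h.symm.dist_eq_two hu hv huv).le

theorem exists_dist_eq_two (h : CompBipOn G B V₁ V₂) {u' : V} (hu : u ∈ V₁) (hu' : u' ∈ V₁)
    (huu' : u ≠ u') (hg : g ∈ V₁) : ∃ r ∈ B, G.dist g r = 2 := by
  by_cases hgu : g = u
  · exact ⟨u', h.left_subset hu', h.dist_eq_two hg hu' (hgu ▸ huu')⟩
  · exact ⟨u, h.left_subset hu, h.dist_eq_two hg hu hgu⟩

end CompBipOn

theorem SimpleGraph.Walk.dist_add_dist_of_mem_support {W : G.Walk u v}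
    (hW : W.length = G.dist u v) (hc : c ∈ W.support) :
    G.dist u c + G.dist c v = G.dist u v := by
  classical
  rw [← length_eq_dist_of_subwalk hW (W.isSubwalk_takeUntil hc),
    ← length_eq_dist_of_subwalk hW (W.isSubwalk_dropUntil hc), ← hW, ← Walk.length_append,
    W.take_spec hc]

def Separates (G : SimpleGraph V) (c u v : V) : Prop :=
  ∀ W : G.Walk u v, c ∈ W.support

theorem Separates.dist_eq (hconn : G.Connected) (h : Separates G c u v) :
    G.dist u v = G.dist u c + G.dist c v := by
  obtain ⟨W, hW⟩ := hconn.exists_walk_length_eq_dist u v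
  exact (W.dist_add_dist_of_mem_support hW (h W)).symm

theorem Separates.left_or_right (h : Separates G c a b) (w : V) :
    Separates G c a w ∨ Separates G c w b := by
  by_contra hcon
  simp only [Separates, not_or, not_forall] at hcon
  obtain ⟨⟨W₁, h₁⟩, W₂, h₂⟩ := hcon
  exact ((Walk.mem_support_append_iff _ _).1 (h (W₁.append W₂))).elim h₁ h₂

theorem Separates.dist_le (hconn : G.Connected) (h : Separates G c a b) {n : ℕ}
    (hmax : ∀ u v, G.dist u v ≤ n) (w : V) :
    G.dist c w + G.dist a c ≤ n ∨ G.dist c w + G.dist c b ≤ n := by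
  rcases h.left_or_right w with h' | h'
  · have := h'.dist_eq hconn
    have := hmax a w
    omega
  · have := h'.dist_eq hconn
    have := hmax w b
    have : G.dist w c = G.dist c w := dist_comm
    omega

def IsGate (G : SimpleGraph V) (B : Set V) (o g : V) : Prop :=
  g ∈ B ∧ ∀ q ∈ B, Separates G g o q

def EntersAt (G : SimpleGraph V) (B : Set V) (o g : V) : Prop :=
  g ∈ B ∧ ∃ q, G.Adj q g ∧ ∃ W : G.Walk o q, ∀ x ∈ W.support, x ∉ B

theorem exists_entersAt_mem_support {t : V} (W : G.Walk o t) (ho : o ∉ B) (ht : t ∈ B) :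
    ∃ g ∈ W.support, EntersAt G B o g := by
  induction W with
  | nil => exact absurd ht ho
  | @cons o o' t hadj W ih =>
    by_cases ho' : o' ∈ B
    · exact ⟨o', by simp, ho', o, hadj, .nil, by simpa using ho⟩
    obtain ⟨g, hgW, hg, q, hqg, U, hU⟩ := ih ho' ht
    refine ⟨g, by simp [hgW], hg, q, hqg, .cons hadj U, fun x hx => ?_⟩
    rcases List.mem_cons.1 (Walk.support_cons .. ▸ hx) with rfl | hx
    · exact ho
    · exact hU x hx

theorem IsBlockSet.entersAt_unique (hB : IsBlockSet G B) {g' : V} (h : EntersAt G B o g)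
    (h' : EntersAt G B o g') : g = g' := by
  classical
  obtain ⟨hg, q, hqg, W, hW⟩ := h
  obtain ⟨hg', q', hqg', W', hW'⟩ := h'
  by_contra hne
  let U := (W.reverse.append W').bypass
  have hU : ∀ x ∈ U.support, x ∉ B := fun x hx => by
    have := (W.reverse.append W').support_bypass_subset_support hx
    rw [Walk.mem_support_append_iff, Walk.support_reverse, List.mem_reverse] at this
    exact this.elim (hW x) (hW' x)
  have hP : (Walk.cons hqg.symm (U.concat hqg')).IsPath := by
    refine ((Walk.bypass_isPath _).concat (fun h => hU _ h hg') hqg').cons ?_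
    rw [Walk.support_concat, List.mem_append, List.mem_singleton]
    rintro (h | h)
    · exact hU _ h hg
    · exact hne h
  exact hU q U.start_mem_support (hB.mem_of_mem_support hP hg hg' (by simp))

theorem IsBlockSet.exists_isGate (hB : IsBlockSet G B) (hconn : G.Connected) (o : V) :
    ∃ g, IsGate G B o g := by
  by_cases ho : o ∈ B
  · exact ⟨o, ho, fun _ _ W => W.start_mem_support⟩
  obtain ⟨⟨b, hb⟩⟩ := hB.1.1.nonempty
  obtain ⟨g, -, hg⟩ := exists_entersAt_mem_support (hconn o b).some ho hb
  refine ⟨g, hg.1, fun q hq W => ?_⟩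
  obtain ⟨g', hg'W, hg'⟩ := exists_entersAt_mem_support W ho hq
  rwa [hB.entersAt_unique hg hg']

namespace IsGate

theorem dist_eq (hconn : G.Connected) (h : IsGate G B o g) (hq : q ∈ B) :
    G.dist o q = G.dist o g + G.dist g q :=
  (h.2 q hq).dist_eq hconn

theorem dist_eq_add_add (hconn : G.Connected) {o' g' : V} (h : IsGate G B o g)
    (h' : IsGate G B o' g') (hne : g ≠ g') :
    G.dist o o' = G.dist o g + G.dist g g' + G.dist g' o' := by
  have hg := h'.dist_eq hconn h.1
  have e₁ : G.dist o' g = G.dist g o' := dist_comm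
  have e₂ : G.dist g' g = G.dist g g' := dist_comm
  have e₃ : G.dist o' g' = G.dist g' o' := dist_comm
  obtain ⟨W, hW⟩ := hconn.exists_walk_length_eq_dist o o'
  obtain ⟨U, hU⟩ := hconn.exists_walk_length_eq_dist o' g'
  -- a shortest walk from `o'` to `g'` through `g` would force `g = g'`
  have hgU : g ∉ U.support := fun hgU => by
    have := U.dist_add_dist_of_mem_support hU hgU
    exact hne (hconn.dist_eq_zero_iff.1 (by omega))
  have hgW : g ∈ W.support :=
    ((Walk.mem_support_append_iff _ _).1 (h.2 g' h'.1 (W.append U))).resolve_right hgU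
  have := W.dist_add_dist_of_mem_support hW hgW
  omega

theorem mem_cutSet (h : IsGate G B o g) (hog : o ≠ g) (hq : q ∈ B) (hqg : q ≠ g) :
    g ∈ cutSet G := by
  intro hconn
  obtain ⟨W⟩ := hconn.preconnected ⟨o, hog⟩ ⟨q, hqg⟩
  have := h.2 q hq (W.map (Embedding.induce _).toHom)
  erw [Walk.support_map, List.mem_map] at this
  obtain ⟨x, -, hx⟩ := this
  exact x.2 hx

theorem eq_or_eq_of_ncard_cutSet_le_two [Finite V] (hcut : (B ∩ cutSet G).ncard ≤ 2)
    (hz : z ∈ B) (h : IsGate G B o g) (hog : o ≠ g) (hzg : z ≠ g) (hx : IsGate G B a x)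
    (hax : a ≠ x) (hzx : z ≠ x) (hy : IsGate G B b y) (hby : b ≠ y) (hzy : z ≠ y) (hxy : x ≠ y) :
    g = x ∨ g = y := by
  by_contra! hne
  have hsub : ({x, y, g} : Set V) ⊆ B ∩ cutSet G := by
    rintro _ (rfl | rfl | rfl)
    · exact ⟨hx.1, hx.mem_cutSet hax hz hzx⟩
    · exact ⟨hy.1, hy.mem_cutSet hby hz hzy⟩
    · exact ⟨h.1, h.mem_cutSet hog hz hzg⟩
  have := Set.ncard_le_ncard hsub (Set.toFinite _)
  rw [Set.ncard_eq_three.2 ⟨x, y, g, hxy, Ne.symm hne.1, Ne.symm hne.2, rfl⟩] at this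
  omega

theorem eq_of_dist_eq_add_two (hconn : G.Connected) {V₁ V₂ : Set V}
    (hbip : CompBipOn G B V₁ V₂) (h : IsGate G B o g) (hx : x ∈ B) (hy : y ∈ B)
    (hxy : G.dist o y = G.dist o x + 2) : g = x := by
  have := h.dist_eq hconn hx
  have := h.dist_eq hconn hy
  have := hbip.dist_le_two h.1 hy
  exact hconn.dist_eq_zero_iff.1 (by omega)

end IsGate

theorem IsBlockSet.exists_three_le_dist (hconn : G.Connected) (hB : IsBlockSet G B)
    {V₁ V₂ : Set V} (hbip : CompBipOn G B V₁ V₂) {u' v' : V} (hu : u ∈ V₁) (hu' : u' ∈ V₁)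
    (huu' : u ≠ u') (hv : v ∈ V₂) (hv' : v' ∈ V₂) (hvv' : v ≠ v') (ho : o ∉ B) :
    ∃ q, 3 ≤ G.dist o q := by
  obtain ⟨g, hg⟩ := hB.exists_isGate hconn o
  obtain ⟨r, hr, hgr⟩ : ∃ r ∈ B, G.dist g r = 2 := by
    rcases hbip.mem_or_mem hg.1 with hg | hg
    · exact hbip.exists_dist_eq_two hu hu' huu' hg
    · exact hbip.symm.exists_dist_eq_two hv hv' hvv' hg
  have := hconn.pos_dist_of_ne fun hog : o = g => ho (hog ▸ hg.1)
  exact ⟨r, by rw [hg.dist_eq hconn hr]; omega⟩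

/-- Used with `x z y` the middle vertices of a geodesic `a ⋯ x z y ⋯ b` of length `2k`. -/
theorem IsBlockSet.dist_le_of_between [Finite V] (hconn : G.Connected) (hB : IsBlockSet G B)
    (hcut : (B ∩ cutSet G).ncard ≤ 2) (hout : ∃ o, o ∉ B) {V₁ V₂ : Set V}
    (hbip : CompBipOn G B V₁ V₂) (hz : z ∈ V₁) (hx : x ∈ V₂) (hy : y ∈ V₂) (hxy : x ≠ y)
    (hgx : IsGate G B a x) (hgy : IsGate G B b y) {k : ℕ} (hax : G.dist a x + 1 = k)
    (hby : G.dist b y + 1 = k) (hmax : ∀ u v, G.dist u v ≤ 2 * k) (w : V) :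
    G.dist z w ≤ k := by
  by_contra! hw
  rw [SimpleGraph.dist_comm] at hw
  have hzB := hbip.left_subset hz
  obtain ⟨s, hs⟩ := hB.exists_isGate hconn w
  have hws := hs.dist_eq hconn hzB
  have hsw : G.dist s w = G.dist w s := SimpleGraph.dist_comm
  have := hmax w z
  have := hmax a w
  have := hmax b w
  rcases hbip.mem_or_mem hs.1 with hs₁ | hs₂
  · by_cases hsz : s = z
    · subst hsz
      have := hgx.dist_eq_add_add hconn hs (hbip.ne hs₁ hx).symm
      have := hbip.symm.dist_eq_one hx hs₁
      omega
    have := hbip.dist_eq_two hs₁ hz hsz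
    rcases Nat.lt_or_ge k 2 with hk | hk
    · -- `k = 1`: then `w = s`, so both sides of `B` have two vertices
      have hsw : s = w := hconn.dist_eq_zero_iff.1 (by omega)
      obtain ⟨o, ho⟩ := hout
      obtain ⟨q, hq⟩ := hB.exists_three_le_dist hconn hbip hs₁ hz hsz hx hy hxy ho
      have := hmax o q
      omega
    · -- `k ≥ 2`: the gates `x`, `y`, `s` would be three cut-vertices of `B`
      have hne : ∀ {u v}, 0 < G.dist u v → u ≠ v := fun h huv => by simp [huv] at h
      rcases hs.eq_or_eq_of_ncard_cutSet_le_two hcut hzB (hne (by omega)) (Ne.symm hsz) hgx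
          (hne (by omega)) (hbip.ne hz hx) hgy (hne (by omega)) (hbip.ne hz hy) hxy with rfl | rfl
      · exact hbip.ne hs₁ hx rfl
      · exact hbip.ne hs₁ hy rfl
  · have := hbip.symm.dist_eq_one hs₂ hz
    by_cases hsx : s = x
    · subst hsx
      have := hgy.dist_eq_add_add hconn hs (Ne.symm hxy)
      have := hbip.symm.dist_eq_two hy hs₂ (Ne.symm hxy)
      omega
    · have := hgx.dist_eq_add_add hconn hs (Ne.symm hsx)
      have := hbip.symm.dist_eq_two hx hs₂ (Ne.symm hsx)
      omega

theorem SimpleGraph.Walk.dist_getVert_left {p : G.Walk a b} (hp : p.length = G.dist a b)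
    (n : ℕ) : G.dist a (p.getVert n) = min n p.length := by
  rw [← length_eq_dist_of_subwalk hp (p.isSubwalk_take n), take_length]

theorem SimpleGraph.Walk.dist_getVert_right {p : G.Walk a b} (hp : p.length = G.dist a b)
    (n : ℕ) : G.dist (p.getVert n) b = p.length - n := by
  rw [← length_eq_dist_of_subwalk hp (p.isSubwalk_drop n), drop_length]

theorem Separates.dist_getVert_le (hconn : G.Connected) {p : G.Walk a b}
    (hp : p.length = G.dist a b) (hmax : ∀ u v, G.dist u v ≤ p.length) {i : ℕ}
    (hi : i ≤ p.length) (h : Separates G (p.getVert i) a b) (w : V) :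
    G.dist (p.getVert i) w ≤ max i (p.length - i) := by
  have := h.dist_le hconn hmax w
  have := p.dist_getVert_left hp i
  have := p.dist_getVert_right hp i
  omega

theorem exists_isBlockSet_of_not_separates [Finite V] {p : G.Walk a b}
    (hp : p.length = G.dist a b) {i : ℕ} (hi : 0 < i) (hiL : i < p.length)
    (h : ¬ Separates G (p.getVert i) a b) :
    ∃ B, IsBlockSet G B ∧ p.getVert (i - 1) ∈ B ∧ p.getVert i ∈ B ∧ p.getVert (i + 1) ∈ B := by
  classical
  have hne : ∀ j, j ≠ i → p.getVert j ≠ p.getVert i := fun j hj hji => by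
    have := p.dist_getVert_right hp j
    have := p.dist_getVert_right hp i
    rw [hji] at *
    omega
  have hxz : G.Adj (p.getVert (i - 1)) (p.getVert i) := by
    simpa [Nat.sub_add_cancel hi] using p.adj_getVert_succ (i := i - 1) (by omega)
  have hyz : G.Adj (p.getVert (i + 1)) (p.getVert i) := (p.adj_getVert_succ hiL).symm
  simp only [Separates, not_forall] at h
  obtain ⟨W, hW⟩ := h
  -- a walk from `p (i - 1)` to `p (i + 1)` avoiding `p i`, closed up into a path through `p i`
  let U := (p.take (i - 1)).reverse.append (W.append (p.drop (i + 1)).reverse)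
  have hU : p.getVert i ∉ U.support := by
    simp only [U, Walk.mem_support_append_iff, Walk.support_reverse, List.mem_reverse, not_or]
    refine ⟨fun hz => ?_, hW, fun hz => ?_⟩
    · obtain ⟨j, hj, -⟩ := Walk.mem_support_iff_exists_getVert.1 hz
      rw [Walk.take_getVert] at hj
      exact hne _ (by omega) hj
    · obtain ⟨j, hj, -⟩ := Walk.mem_support_iff_exists_getVert.1 hz
      rw [Walk.drop_getVert] at hj
      exact hne _ (by omega) hj
  have hP : (U.bypass.concat hyz).IsPath :=
    (Walk.bypass_isPath U).concat (fun h => hU (U.support_bypass_subset_support h)) hyz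
  obtain ⟨B, hSB, hB⟩ := exists_isBlockSet_superset
    ((noCutVtx_induce_pair hxz).induce_union_support hP (by simp) (by simp))
  refine ⟨B, hB, hSB (Or.inl (by simp)), hSB (Or.inl (by simp)), hSB (Or.inr ?_)⟩
  simp [Walk.support_concat]

theorem ClassB.separates_of_odd [Finite V] (hG : ClassB G) {p : G.Walk a b}
    (hp : p.length = G.dist a b) {k : ℕ} (hk : 0 < k) (hL : p.length = 2 * k + 1) :
    Separates G (p.getVert k) a b ∨ Separates G (p.getVert (k + 1)) a b := by
  by_contra! h
  obtain ⟨B, hB, hB₀, hB₁, hB₂⟩ := exists_isBlockSet_of_not_separates hp hk (by omega) h.1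
  obtain ⟨B', hB', hB'₁, hB'₂, hB'₃⟩ :=
    exists_isBlockSet_of_not_separates hp (by omega) (by omega) h.2
  rw [Nat.add_sub_cancel] at hB'₁
  have hne : p.getVert k ≠ p.getVert (k + 1) :=
    (p.isPath_of_length_eq_dist hp).getVert_injOn.ne (by simp; omega) (by simp; omega) (by omega)
  obtain rfl := hB.eq_of_mem_of_mem hB' ⟨hB₁, hB'₁⟩ ⟨hB₂, hB'₂⟩ hne
  obtain ⟨V₁, V₂, hbip⟩ := hG.1.2 B hB
  -- `p (k - 1)` and `p (k + 2)` are three apart on the geodesic but lie in one block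
  have := hbip.dist_le_two hB₀ hB'₃
  have := hG.1.1.dist_triangle (u := p.getVert (k - 1)) (v := p.getVert (k + 1 + 1)) (w := b)
  have := p.dist_getVert_right hp (k - 1)
  have := p.dist_getVert_right hp (k + 1 + 1)
  omega

theorem ClassB.dist_getVert_le_of_even [Finite V] (hG : ClassB G) {p : G.Walk a b}
    (hp : p.length = G.dist a b) (hmax : ∀ u v, G.dist u v ≤ p.length) {k : ℕ} (hk : 0 < k)
    (hL : p.length = 2 * k) : ∀ w, G.dist (p.getVert k) w ≤ k := by
  obtain ⟨⟨hconn, hbip⟩, htwo, hcut⟩ := hG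
  intro w
  by_cases hsep : Separates G (p.getVert k) a b
  · have := hsep.dist_getVert_le hconn hp hmax (by omega) w
    omega
  obtain ⟨B, hB, hx, hz, hy⟩ := exists_isBlockSet_of_not_separates hp hk (by omega) hsep
  obtain ⟨V₁, V₂, hV⟩ := hbip B hB
  wlog hz₁ : p.getVert k ∈ V₁ generalizing V₁ V₂
  · exact this V₂ V₁ hV.symm ((hV.mem_or_mem hz).resolve_left hz₁)
  have hzx : G.Adj (p.getVert k) (p.getVert (k - 1)) := by
    simpa [Nat.sub_add_cancel hk] using (p.adj_getVert_succ (i := k - 1) (by omega)).symm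
  have hzy : G.Adj (p.getVert k) (p.getVert (k + 1)) := p.adj_getVert_succ (by omega)
  have hax := p.dist_getVert_left hp (k - 1)
  have hay := p.dist_getVert_left hp (k + 1)
  have hbx : G.dist b (p.getVert (k - 1)) = k + 1 := by
    rw [SimpleGraph.dist_comm, p.dist_getVert_right hp]; omega
  have hby : G.dist b (p.getVert (k + 1)) = k - 1 := by
    rw [SimpleGraph.dist_comm, p.dist_getVert_right hp]; omega
  obtain ⟨ga, hga⟩ := hB.exists_isGate hconn a
  obtain ⟨gb, hgb⟩ := hB.exists_isGate hconn b
  have hgx := hga.eq_of_dist_eq_add_two hconn hV hx hy (by omega) ▸ hga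
  have hgy := hgb.eq_of_dist_eq_add_two hconn hV hy hx (by omega) ▸ hgb
  exact hB.dist_le_of_between hconn (hcut B hB) (hB.exists_not_mem htwo) hV hz₁
    (hV.mem_right_of_adj hz₁ hx hzx) (hV.mem_right_of_adj hz₁ hy hzy)
    (fun h => by rw [h] at hax; omega) hgx hgy (by omega) (by omega) (hL ▸ hmax) w

theorem ClassB.exists_forall_dist_getVert_le [Finite V] (hG : ClassB G) {p : G.Walk a b}
    (hp : p.length = G.dist a b) (hmax : ∀ u v, G.dist u v ≤ p.length) :
    ∃ i, ∀ w, G.dist (p.getVert i) w ≤ (p.length + 1) / 2 := by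
  rcases Nat.lt_or_ge p.length 2 with hL | hL
  · exact ⟨0, fun w => by simpa using (hmax a w).trans (by omega)⟩
  obtain ⟨k, hk | hk⟩ := Nat.even_or_odd' p.length
  · exact ⟨k, fun w => (hG.dist_getVert_le_of_even hp hmax (by omega) hk w).trans
      (by omega)⟩
  · rcases hG.separates_of_odd hp (by omega) hk with h | h
    · exact ⟨k, fun w => (h.dist_getVert_le hG.1.1 hp hmax (by omega) w).trans (by omega)⟩
    · exact ⟨k + 1, fun w => (h.dist_getVert_le hG.1.1 hp hmax (by omega) w).trans (by omega)⟩

theorem dist_le_gdiam [Finite V] (u v : V) : G.dist u v ≤ gdiam G :=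
  (le_csSup (Set.finite_range _).bddAbove ⟨v, rfl⟩).trans
    (le_csSup (Set.finite_range (ecc G)).bddAbove ⟨u, rfl⟩)

theorem mem_gcenter_of_forall_dist_le [Finite V] (hconn : G.Connected)
    (hz : ∀ w, G.dist z w ≤ (G.dist a b + 1) / 2) : z ∈ gcenter G := by
  have : Nonempty V := ⟨z⟩
  have hecc : ∀ v, (G.dist a b + 1) / 2 ≤ ecc G v := fun v => by
    have := le_csSup (Set.finite_range (G.dist v)).bddAbove ⟨a, rfl⟩
    have := le_csSup (Set.finite_range (G.dist v)).bddAbove ⟨b, rfl⟩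
    have := hconn.dist_triangle (u := a) (v := v) (w := b)
    have : G.dist a v = G.dist v a := SimpleGraph.dist_comm
    simp only [ecc]
    omega
  have hz' : ecc G z ≤ (G.dist a b + 1) / 2 :=
    csSup_le (Set.range_nonempty _) (by rintro _ ⟨w, rfl⟩; exact hz w)
  have hleast : IsLeast (Set.range (ecc G)) (ecc G z) :=
    ⟨⟨z, rfl⟩, by rintro _ ⟨v, rfl⟩; exact hz'.trans (hecc v)⟩
  exact hleast.csInf_eq.symm

end

theorem stmt_16_general {V : Type*} [Fintype V] (G : SimpleGraph V) (hG : ClassB G)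
    {a b : V} (p : G.Walk a b)
    (hlen : p.length = G.dist a b) (hdiam : G.dist a b = gdiam G) :
    ∃ z ∈ p.support, z ∈ gcenter G := by
  have hmax : ∀ u v, G.dist u v ≤ p.length := fun u v => hlen ▸ hdiam ▸ dist_le_gdiam u v
  obtain ⟨i, hi⟩ := hG.exists_forall_dist_getVert_le hlen hmax
  exact ⟨p.getVert i, p.getVert_mem_support i, mem_gcenter_of_forall_dist_le hG.1.1 (hlen ▸ hi)⟩

theorem stmt_16 {V : Type*} [Fintype V] (G : SimpleGraph V) (hG : ClassB G)
    {a b : V} (p : G.Walk a b) (hpath : p.IsPath)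
    (hlen : p.length = G.dist a b) (hdiam : G.dist a b = gdiam G) :
    ∃ z ∈ p.support, z ∈ gcenter G :=
  stmt_16_general G hG p hlen hdiam
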